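/- Let n = 2k with k ≥ 2, and define the Boolean function f_n : {0,1}ⁿ → {0,1} by f_n(x) = 1 if and only if |x| ≥ k+1, or (|x| ≥ k and for every j ∈ {1,…,k} not both x_{2j−1} = 1 and x_{2j} = 1), where |x| = Σᵢ xᵢ. Let M = {(2j−1, 2j) : 1 ≤ j ≤ k} and let N(k) = k(k−1)/2. Define q(x) = Σ_{i=1}^{n} xᵢ + (1/N(k)) · Σ_{1 ≤ i < j ≤ n, (i,j) ∉ M} xᵢ xⱼ. Then for every x ∈ {0,1}ⁿ, f_n(x) = 1 if and only if q(x) ≥ k + 1. In particular, f_n has a positive QTF representation of size O(n²). -/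

import Mathlib

open Finset

/-- Evaluation of a multilinear real polynomial in `n` variables given by its coefficient
function `c` (where `c S` is the coefficient of the monomial `∏ i ∈ S, x i`). -/
noncomputable def mEval {n : ℕ} (c : Finset (Fin n) → ℝ) (x : Fin n → ℝ) : ℝ :=
  ∑ S : Finset (Fin n), c S * ∏ i ∈ S, x i

/-- The real value of a Boolean. -/
noncomputable def bval (b : Bool) : ℝ := if b then 1 else 0

/-- The weight (number of ones) of a Boolean vector. -/
def wt {n : ℕ} (x : Fin n → Bool) : ℕ := ∑ i, if x i then 1 else 0

-- The number of terms (size) of a multilinear polynomial given by its coefficients.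
open Classical in
noncomputable def nTerms {n : ℕ} (c : Finset (Fin n) → ℝ) : ℕ :=
  (Finset.univ.filter (fun S => c S ≠ 0)).card

/-!
Write `w = |x|`, `N = N(k)`, and let `p` and `m` count the pairs `i < j` of ones of `x` outside
and inside `M`, so that `p + m = C(w, 2)` and `q(x) = w + p / N`. If `w ≥ k + 1` the threshold is
met outright. If `w ≤ k - 1`, then `p ≤ C(k - 1, 2) < N`, so `q(x) < w + 1 ≤ k`. If `w = k`, then
`q(x) = k + 1 - m / N`, which reaches `k + 1` exactly when no block of `M` is filled.
-/

theorem card_filter_lt_product_self {α : Type*} [LinearOrder α] (s : Finset α) :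
    #{p ∈ s ×ˢ s | p.1 < p.2} = (#s).choose 2 := by
  rw [← card_powersetCard]
  refine card_bij (fun p _ => {p.1, p.2}) ?_ ?_ ?_
  · rintro ⟨a, b⟩ h
    simp only [mem_filter, mem_product] at h
    simp [mem_powersetCard, insert_subset_iff, h.1.1, h.1.2, card_pair h.2.ne]
  · rintro ⟨a, b⟩ h ⟨c, d⟩ h' e
    simp only [mem_filter, mem_product] at h h'
    simp only [Finset.ext_iff, mem_insert, mem_singleton] at e
    have := e a; have := e b; have := e c
    grind
  · intro t ht
    obtain ⟨hts, hcard⟩ := mem_powersetCard.1 ht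
    obtain ⟨a, b, hab, rfl⟩ := card_eq_two.1 hcard
    rcases hab.lt_or_gt with h | h
    · exact ⟨(a, b), by simp_all [insert_subset_iff], rfl⟩
    · exact ⟨(b, a), by simp_all [insert_subset_iff], pair_comm _ _⟩

theorem card_filter_lt_and_not_add_card_filter_lt_and {α : Type*} [LinearOrder α]
    (s : Finset α) (P : α → α → Prop) [DecidableRel P] :
    #{p ∈ s ×ˢ s | p.1 < p.2 ∧ ¬P p.1 p.2} + #{p ∈ s ×ˢ s | p.1 < p.2 ∧ P p.1 p.2} =
      (#s).choose 2 := by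
  rw [← card_filter_lt_product_self, ← filter_filter, ← filter_filter, add_comm,
    card_filter_add_card_filter_not]

theorem choose_two_mul_succ_le_iff {k w p m : ℕ} (hk : 2 ≤ k) (h : p + m = w.choose 2) :
    k.choose 2 * (k + 1) ≤ k.choose 2 * w + p ↔ k + 1 ≤ w ∨ (k ≤ w ∧ m = 0) := by
  rcases lt_trichotomy w k with hw | rfl | hw
  · have hchoose : w.choose 2 < k.choose 2 := by
      obtain ⟨j, rfl⟩ : ∃ j, k = j + 1 := ⟨k - 1, by omega⟩
      have hsucc : (j + 1).choose 2 = j.choose 2 + j := by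
        rw [Nat.choose_succ_succ', Nat.choose_one_right, add_comm]
      have := Nat.choose_le_choose 2 (Nat.le_of_lt_succ hw)
      omega
    have : k.choose 2 * (w + 2) ≤ k.choose 2 * (k + 1) := Nat.mul_le_mul_left _ (by omega)
    constructor
    · intro; nlinarith
    · omega
  · rw [Nat.mul_succ]
    omega
  · have : k.choose 2 * (k + 1) ≤ k.choose 2 * w := Nat.mul_le_mul_left _ hw
    omega

theorem add_one_le_add_one_div_choose_two_mul_iff {k w p m : ℕ} (hk : 2 ≤ k)
    (h : p + m = w.choose 2) :
    (k + 1 : ℝ) ≤ w + 1 / (k.choose 2 : ℕ) * p ↔ k + 1 ≤ w ∨ (k ≤ w ∧ m = 0) := by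
  have hN : (0 : ℝ) < k.choose 2 := by exact_mod_cast Nat.choose_pos hk
  have hclear : (k.choose 2 : ℝ) * (w + 1 / (k.choose 2 : ℕ) * p) = k.choose 2 * w + p := by
    field_simp
  rw [← choose_two_mul_succ_le_iff hk h, ← mul_le_mul_iff_right₀ hN, hclear]
  norm_cast

section BooleanVectors

variable {n : ℕ}

def ones (x : Fin n → Bool) : Finset (Fin n) := {i | x i}

@[simp]
theorem mem_ones {x : Fin n → Bool} {i : Fin n} : i ∈ ones x ↔ x i = true := by
  simp [ones]

theorem wt_eq_card_ones (x : Fin n → Bool) : wt x = #(ones x) := by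
  rw [wt, ones, card_filter]

theorem sum_bval (x : Fin n → Bool) : ∑ i, bval (x i) = #(ones x) := by
  rw [← wt_eq_card_ones, wt]
  push_cast
  simp [bval]

theorem sum_ite_bval_mul_bval (R : Fin n → Fin n → Prop) [DecidableRel R] (x : Fin n → Bool) :
    ∑ i, ∑ j, (if R i j then bval (x i) * bval (x j) else 0) =
      #{p ∈ ones x ×ˢ ones x | R p.1 p.2} := by
  rw [card_filter, sum_product, ones, sum_filter]
  push_cast
  refine sum_congr rfl fun i _ => ?_
  rw [sum_filter]
  cases x i
  · simp [bval]
  · refine sum_congr rfl fun j _ => ?_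
    cases x j <;> simp [bval]

end BooleanVectors

theorem card_blockPairs_eq_zero_iff {k : ℕ} (s : Finset (Fin (2 * k))) :
    #{p ∈ s ×ˢ s | p.1 < p.2 ∧ ((p.2 : ℕ) = p.1 + 1 ∧ Even (p.1 : ℕ))} = 0 ↔
      ∀ j : Fin k, ¬(⟨2 * j, by linarith [j.2]⟩ ∈ s ∧ ⟨2 * j + 1, by linarith [j.2]⟩ ∈ s) := by
  simp only [card_eq_zero, filter_eq_empty_iff, mem_product, Prod.forall]
  constructor
  · rintro h j ⟨h1, h2⟩
    exact h _ _ ⟨h1, h2⟩ ⟨Fin.mk_lt_mk.2 (by omega), rfl, even_two_mul _⟩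
  · rintro h i i' ⟨hi, hi'⟩ ⟨-, hsucc, j, hj⟩
    refine h ⟨j, by omega⟩ ⟨?_, ?_⟩
    · convert hi using 1; exact Fin.ext (by dsimp only; omega)
    · convert hi' using 1; exact Fin.ext (by dsimp only; omega)

section QuadraticCoefficients

variable {n : ℕ}

def quadCoef (a : Fin n → ℝ) (b : Fin n → Fin n → ℝ) (T : Finset (Fin n)) : ℝ :=
  (∑ i, if T = {i} then a i else 0) + ∑ p : Fin n × Fin n, if T = {p.1, p.2} then b p.1 p.2 else 0

theorem mEval_add (c d : Finset (Fin n) → ℝ) (y : Fin n → ℝ) :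
    mEval (fun T => c T + d T) y = mEval c y + mEval d y := by
  simp only [mEval, add_mul, sum_add_distrib]

theorem mEval_sum_ite_eq {ι : Type*} (s : Finset ι) (S : ι → Finset (Fin n)) (a : ι → ℝ)
    (y : Fin n → ℝ) :
    mEval (fun T => ∑ t ∈ s, if T = S t then a t else 0) y = ∑ t ∈ s, a t * ∏ i ∈ S t, y i := by
  simp only [mEval, sum_mul, ite_mul, zero_mul]
  rw [sum_comm]
  simp

theorem mEval_quadCoef (a : Fin n → ℝ) (b : Fin n → Fin n → ℝ) (hb : ∀ i, b i i = 0)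
    (y : Fin n → ℝ) :
    mEval (quadCoef a b) y = ∑ i, a i * y i + ∑ i, ∑ j, b i j * (y i * y j) := by
  unfold quadCoef
  rw [mEval_add, mEval_sum_ite_eq, mEval_sum_ite_eq, ← Fintype.sum_prod_type']
  simp only [prod_singleton]
  congr 1
  refine sum_congr rfl fun ⟨i, j⟩ _ => ?_
  rcases eq_or_ne i j with rfl | hij
  · simp [hb]
  · rw [prod_pair hij]

theorem exists_eq_pair_of_quadCoef_ne_zero {a : Fin n → ℝ} {b : Fin n → Fin n → ℝ}
    {T : Finset (Fin n)} (h : quadCoef a b T ≠ 0) : ∃ i j, T = {i, j} := by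
  contrapose! h
  have hsingle : ∀ i, T ≠ {i} := fun i => by simpa using h i i
  simp [quadCoef, hsingle, h]

theorem card_le_two_of_quadCoef_ne_zero {a : Fin n → ℝ} {b : Fin n → Fin n → ℝ}
    {T : Finset (Fin n)} (h : quadCoef a b T ≠ 0) : #T ≤ 2 := by
  obtain ⟨i, j, rfl⟩ := exists_eq_pair_of_quadCoef_ne_zero h
  exact card_le_two

theorem quadCoef_nonneg {a : Fin n → ℝ} {b : Fin n → Fin n → ℝ} (ha : 0 ≤ a) (hb : 0 ≤ b)
    (T : Finset (Fin n)) : 0 ≤ quadCoef a b T := by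
  unfold quadCoef
  refine add_nonneg (sum_nonneg fun i _ => ?_) (sum_nonneg fun p _ => ?_) <;> split_ifs
  exacts [ha i, le_rfl, hb p.1 p.2, le_rfl]

theorem quadCoef_empty (a : Fin n → ℝ) (b : Fin n → Fin n → ℝ) : quadCoef a b ∅ = 0 := by
  simp [quadCoef, eq_comm (a := (∅ : Finset (Fin n)))]

theorem nTerms_quadCoef_le (a : Fin n → ℝ) (b : Fin n → Fin n → ℝ) :
    nTerms (quadCoef a b) ≤ n ^ 2 := by
  classical
  calc nTerms (quadCoef a b)
      ≤ #(univ.image fun p : Fin n × Fin n => ({p.1, p.2} : Finset (Fin n))) := by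
        refine card_le_card fun T hT => ?_
        obtain ⟨i, j, rfl⟩ := exists_eq_pair_of_quadCoef_ne_zero (mem_filter.1 hT).2
        exact mem_image.2 ⟨(i, j), mem_univ _, rfl⟩
    _ ≤ n ^ 2 := card_image_le.trans (by simp [sq])

end QuadraticCoefficients

/-- The function `f_n` (with `n = 2k`, `k ≥ 2`) has the positive quadratic threshold
representation `q(x) = Σ_i x_i + (1/N(k)) Σ_{i<j, (i,j)∉M} x_i x_j ≥ k + 1` where
`N(k) = k(k-1)/2`, and `M` is the set of block pairs; in particular `f_n` has a positive
QTF representation of size `O(n²)`. (Variables are indexed `0, …, 2k-1`; the `j`-th block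
consists of indices `2j, 2j+1`, so a pair `i < j` is in `M` iff `j = i + 1` and `i` is even.) -/
theorem f_n_positive_qtf_upper (k : ℕ) (hk : 2 ≤ k) (f : (Fin (2 * k) → Bool) → Bool)
    (hf : ∀ x, f x = true ↔
      (k + 1 ≤ wt x ∨ (k ≤ wt x ∧
        ∀ j : Fin k, ¬(x ⟨2 * j, by omega⟩ = true ∧ x ⟨2 * j + 1, by omega⟩ = true)))) :
    (∀ x : Fin (2 * k) → Bool,
      f x = true ↔
        (k : ℝ) + 1 ≤ (∑ i, bval (x i)) +
          (1 / ((k * (k - 1) / 2 : ℕ) : ℝ)) *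
            ∑ i : Fin (2 * k), ∑ j : Fin (2 * k),
              if i < j ∧ ¬((j : ℕ) = (i : ℕ) + 1 ∧ Even (i : ℕ)) then bval (x i) * bval (x j)
              else 0) ∧
    ∃ coef : Finset (Fin (2 * k)) → ℝ,
      (∀ T, coef T ≠ 0 → T.card ≤ 2) ∧
      (∀ T, 0 ≤ coef T) ∧
      coef ∅ = 0 ∧
      nTerms coef ≤ (2 * k) ^ 2 ∧
      (∀ x : Fin (2 * k) → Bool,
        mEval coef (fun i => bval (x i)) =
          (∑ i, bval (x i)) +
            (1 / ((k * (k - 1) / 2 : ℕ) : ℝ)) *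
              ∑ i : Fin (2 * k), ∑ j : Fin (2 * k),
                if i < j ∧ ¬((j : ℕ) = (i : ℕ) + 1 ∧ Even (i : ℕ)) then bval (x i) * bval (x j)
                else 0) := by
  refine ⟨fun x => ?_, ?_⟩
  · have hpairs := card_filter_lt_and_not_add_card_filter_lt_and (ones x)
      fun i j : Fin (2 * k) => (j : ℕ) = i + 1 ∧ Even (i : ℕ)
    rw [hf, sum_bval, sum_ite_bval_mul_bval, wt_eq_card_ones, ← Nat.choose_two_right,
      add_one_le_add_one_div_choose_two_mul_iff hk hpairs, card_blockPairs_eq_zero_iff]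
    simp only [mem_ones]
  · refine ⟨quadCoef (fun _ => 1) (fun i j =>
        if i < j ∧ ¬((j : ℕ) = (i : ℕ) + 1 ∧ Even (i : ℕ)) then 1 / ((k * (k - 1) / 2 : ℕ) : ℝ)
        else 0),
      fun _ => card_le_two_of_quadCoef_ne_zero, quadCoef_nonneg (fun _ => zero_le_one)
        (fun i j => by positivity), quadCoef_empty _ _, nTerms_quadCoef_le _ _, fun x => ?_⟩
    rw [mEval_quadCoef _ _ (fun i => if_neg fun h => h.1.false)]
    simp only [one_mul, mul_sum, ite_mul, zero_mul, mul_ite, mul_zero]
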